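/- Let p ∈ NC(k,l), q ∈ NC(l,m) and let C be a non-trivial (p,q)-connected component with gap interval E = {c_k+1, ..., c_{k+1}−1} between consecutive points c_k < c_{k+1} of C ∩ [l]. If E is an entrance of C (every x ∈ E lies in some block not nested in C), then for every x ∈ E exactly one of the blocks π_p(x), π_q(x) through x is not nested in C, and the other one is nested in C. -/
import Mathlib


namespace Stmt11

/-- Two points of the three-row diagram (rows `0`, `1`, `2`) are related if they are
joined by a finite chain of pairwise-overlapping blocks of `p ⊔ q`. -/
def ChainRel (p q : Set (Set (ℕ × ℕ))) (a b : ℕ × ℕ) : Prop :=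
  ∃ (n : ℕ) (Bs : Fin (n + 1) → Set (ℕ × ℕ)),
    (∀ i, Bs i ∈ p ∪ q) ∧ a ∈ Bs 0 ∧ b ∈ Bs (Fin.last n) ∧
      ∀ i : Fin n, (Bs i.castSucc ∩ Bs i.succ).Nonempty

/-- `B` (a block of the partition `r`) is nested in the component `C`: it is a
single-layer middle block and some block `D` of `r` meeting `C` satisfies
`min (D ∩ [l]) < min B ≤ max B < max (D ∩ [l])`. -/
def NestedIn (r : Set (Set (ℕ × ℕ))) (C B : Set (ℕ × ℕ)) : Prop :=
  (∀ w ∈ B, w.1 = 1) ∧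
    ∃ D ∈ r, (D ∩ C).Nonempty ∧ ∃ y ∈ D, ∃ z ∈ D, y.1 = 1 ∧ z.1 = 1 ∧
      ∀ w ∈ B, y.2 < w.2 ∧ w.2 < z.2

/-- Non-crossing with respect to a linearisation `f` of the points. -/
def Noncross (r : Set (Set (ℕ × ℕ))) (f : ℕ × ℕ → ℕ) : Prop :=
  ¬ ∃ B ∈ r, ∃ C ∈ r, B ≠ C ∧ ∃ a ∈ B, ∃ b ∈ C, ∃ c ∈ B, ∃ d ∈ C,
    f a < f b ∧ f b < f c ∧ f c < f d


section Aux

variable {p q : Set (Set (ℕ × ℕ))} {a b c : ℕ × ℕ}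

/-- A block overlapping a chain component can be absorbed into the chain. -/
lemma chain_snoc {B : Set (ℕ × ℕ)}
    (h : ChainRel p q a b) (hB : B ∈ p ∪ q) (hbB : b ∈ B) (hcB : c ∈ B) :
    ChainRel p q a c := by
  obtain ⟨n, Bs, h1, ha, hb, hov⟩ := h
  refine ⟨n + 1, Fin.snoc Bs B, ?_, ?_, ?_, ?_⟩
  · intro i
    refine Fin.lastCases ?_ ?_ i
    · simpa using hB
    · intro j; simpa using h1 j
  · have h0 : (0 : Fin (n + 2)) = Fin.castSucc 0 := rfl
    rw [h0, Fin.snoc_castSucc]; exact ha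
  · simpa using hcB
  · intro i
    refine Fin.lastCases ?_ ?_ i
    · refine ⟨b, ?_, ?_⟩
      · rw [Fin.snoc_castSucc]; exact hb
      · rw [Fin.succ_last, Fin.snoc_last]; exact hbB
    · intro j
      rw [Fin.succ_castSucc]
      rw [Fin.snoc_castSucc, Fin.snoc_castSucc]
      exact hov j

/-- A chain gives a transitive-closure path through overlapping blocks. -/
lemma chain_transGen (h : ChainRel p q a b) :
    Relation.TransGen (fun u v => ∃ B, B ∈ p ∪ q ∧ u ∈ B ∧ v ∈ B) a b := by
  obtain ⟨n, Bs, h1, ha, hb, hov⟩ := h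
  induction n generalizing a with
  | zero => exact Relation.TransGen.single ⟨Bs 0, h1 0, ha, hb⟩
  | succ n ih =>
    obtain ⟨w, hw1, hw2⟩ := hov 0
    refine Relation.TransGen.head (b := w) ⟨Bs 0, h1 0, ha, by simpa using hw1⟩ ?_
    refine ih (fun i => Bs i.succ) (fun i => h1 _) hw2 ?_ ?_
    · show b ∈ Bs (Fin.last n).succ
      rw [Fin.succ_last]; exact hb
    · intro i
      have h2 := hov i.succ
      show (Bs i.castSucc.succ ∩ Bs i.succ.succ).Nonempty
      rw [Fin.succ_castSucc]; exact h2

end Aux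

/-- If a block `D` of `p` meets `C` and has middle legs on both sides of `x`,
then the `p`-block through `(1, x)` (not itself meeting `C`) is nested. -/
lemma nested_of_straddle_p (k l : ℕ) (p : Set (Set (ℕ × ℕ)))
    (hpsub : ∀ B ∈ p, B ⊆ {x : ℕ × ℕ |
      (x.1 = 0 ∧ 1 ≤ x.2 ∧ x.2 ≤ k) ∨ (x.1 = 1 ∧ 1 ≤ x.2 ∧ x.2 ≤ l)})
    (hppart : ∀ x : ℕ × ℕ,
      ((x.1 = 0 ∧ 1 ≤ x.2 ∧ x.2 ≤ k) ∨ (x.1 = 1 ∧ 1 ≤ x.2 ∧ x.2 ≤ l)) →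
        ∃! B, B ∈ p ∧ x ∈ B)
    (hncp : Noncross p fun w => if w.1 = 0 then w.2 else k + (l + 1 - w.2))
    (C : Set (ℕ × ℕ)) (x : ℕ) (D : Set (ℕ × ℕ)) (hD : D ∈ p) (hDC : (D ∩ C).Nonempty)
    (y z : ℕ × ℕ) (hy : y ∈ D) (hz : z ∈ D) (hy1 : y.1 = 1) (hz1 : z.1 = 1)
    (hyx : y.2 < x) (hxz : x < z.2)
    (Bp : Set (ℕ × ℕ)) (hBp : Bp ∈ p) (hxBp : ((1 : ℕ), x) ∈ Bp)
    (hnd : ((1 : ℕ), x) ∉ D) :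
    NestedIn p C Bp := by
  have hBpD : Bp ≠ D := fun h => hnd (h ▸ hxBp)
  set f : ℕ × ℕ → ℕ := fun w => if w.1 = 0 then w.2 else k + (l + 1 - w.2) with hfdef
  have hyb : 1 ≤ y.2 ∧ y.2 ≤ l := by
    rcases hpsub D hD hy with ⟨h0, h⟩ | ⟨_, h⟩
    · omega
    · exact h
  have hzb : 1 ≤ z.2 ∧ z.2 ≤ l := by
    rcases hpsub D hD hz with ⟨h0, h⟩ | ⟨_, h⟩
    · omega
    · exact h
  have hxb : 1 ≤ x ∧ x ≤ l := by
    rcases hpsub Bp hBp hxBp with ⟨h0, h⟩ | ⟨_, h⟩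
    · simp at h0
    · exact h
  have hfy : f y = k + (l + 1 - y.2) := by simp [hfdef, hy1]
  have hfz : f z = k + (l + 1 - z.2) := by simp [hfdef, hz1]
  have hfx : f ((1 : ℕ), x) = k + (l + 1 - x) := by simp [hfdef]
  have key : ∀ w ∈ Bp, w.1 = 1 ∧ y.2 < w.2 ∧ w.2 < z.2 := by
    intro w hw
    rcases hpsub Bp hBp hw with ⟨hw0, hw1, hw2⟩ | ⟨hw0, hw1, hw2⟩
    · -- w in top row: crossing w, z, (1,x), y
      exfalso
      apply hncp
      refine ⟨Bp, hBp, D, hD, hBpD, w, hw, z, hz, ((1 : ℕ), x), hxBp, y, hy, ?_, ?_, ?_⟩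
      · rw [hfz]; simp [hfdef, hw0]; omega
      · rw [hfz, hfx]; omega
      · rw [hfx, hfy]; omega
    · -- w in middle row
      have hfw : f w = k + (l + 1 - w.2) := by simp [hfdef, hw0]
      refine ⟨hw0, ?_, ?_⟩
      · rcases Nat.lt_trichotomy y.2 w.2 with h | h | h
        · exact h
        · exfalso
          have hwy : w = y := Prod.ext (by rw [hw0, hy1]) h.symm
          obtain ⟨U, _, hU⟩ := hppart y (Or.inr ⟨hy1, hyb⟩)
          exact hBpD ((hU Bp ⟨hBp, hwy ▸ hw⟩).trans (hU D ⟨hD, hy⟩).symm)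
        · -- w.2 < y.2 : crossing z, (1,x), y, w
          exfalso
          apply hncp
          refine ⟨D, hD, Bp, hBp, hBpD.symm, z, hz, ((1 : ℕ), x), hxBp, y, hy, w, hw,
            ?_, ?_, ?_⟩
          · rw [hfz, hfx]; omega
          · rw [hfx, hfy]; omega
          · rw [hfy, hfw]; omega
      · rcases Nat.lt_trichotomy w.2 z.2 with h | h | h
        · exact h
        · exfalso
          have hwz : w = z := Prod.ext (by rw [hw0, hz1]) h
          obtain ⟨U, _, hU⟩ := hppart z (Or.inr ⟨hz1, hzb⟩)
          exact hBpD ((hU Bp ⟨hBp, hwz ▸ hw⟩).trans (hU D ⟨hD, hz⟩).symm)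
        · -- z.2 < w.2 : crossing w, z, (1,x), y
          exfalso
          apply hncp
          refine ⟨Bp, hBp, D, hD, hBpD, w, hw, z, hz, ((1 : ℕ), x), hxBp, y, hy,
            ?_, ?_, ?_⟩
          · rw [hfw, hfz]; omega
          · rw [hfz, hfx]; omega
          · rw [hfx, hfy]; omega
  exact ⟨fun w hw => (key w hw).1, D, hD, hDC, y, hy, z, hz, hy1, hz1,
    fun w hw => (key w hw).2⟩

/-- The `q`-side analogue of `nested_of_straddle_p`. -/
lemma nested_of_straddle_q (l m : ℕ) (q : Set (Set (ℕ × ℕ)))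
    (hqsub : ∀ B ∈ q, B ⊆ {x : ℕ × ℕ |
      (x.1 = 1 ∧ 1 ≤ x.2 ∧ x.2 ≤ l) ∨ (x.1 = 2 ∧ 1 ≤ x.2 ∧ x.2 ≤ m)})
    (hqpart : ∀ x : ℕ × ℕ,
      ((x.1 = 1 ∧ 1 ≤ x.2 ∧ x.2 ≤ l) ∨ (x.1 = 2 ∧ 1 ≤ x.2 ∧ x.2 ≤ m)) →
        ∃! B, B ∈ q ∧ x ∈ B)
    (hncq : Noncross q fun w => if w.1 = 1 then w.2 else l + (m + 1 - w.2))
    (C : Set (ℕ × ℕ)) (x : ℕ) (D : Set (ℕ × ℕ)) (hD : D ∈ q) (hDC : (D ∩ C).Nonempty)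
    (y z : ℕ × ℕ) (hy : y ∈ D) (hz : z ∈ D) (hy1 : y.1 = 1) (hz1 : z.1 = 1)
    (hyx : y.2 < x) (hxz : x < z.2)
    (Bq : Set (ℕ × ℕ)) (hBq : Bq ∈ q) (hxBq : ((1 : ℕ), x) ∈ Bq)
    (hnd : ((1 : ℕ), x) ∉ D) :
    NestedIn q C Bq := by
  have hBqD : Bq ≠ D := fun h => hnd (h ▸ hxBq)
  set f : ℕ × ℕ → ℕ := fun w => if w.1 = 1 then w.2 else l + (m + 1 - w.2) with hfdef
  have hyb : 1 ≤ y.2 ∧ y.2 ≤ l := by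
    rcases hqsub D hD hy with ⟨_, h⟩ | ⟨h0, h⟩
    · exact h
    · omega
  have hzb : 1 ≤ z.2 ∧ z.2 ≤ l := by
    rcases hqsub D hD hz with ⟨_, h⟩ | ⟨h0, h⟩
    · exact h
    · omega
  have hxb : 1 ≤ x ∧ x ≤ l := by
    rcases hqsub Bq hBq hxBq with ⟨_, h⟩ | ⟨h0, h⟩
    · exact h
    · simp at h0
  have hfy : f y = y.2 := by simp [hfdef, hy1]
  have hfz : f z = z.2 := by simp [hfdef, hz1]
  have hfx : f ((1 : ℕ), x) = x := by simp [hfdef]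
  have key : ∀ w ∈ Bq, w.1 = 1 ∧ y.2 < w.2 ∧ w.2 < z.2 := by
    intro w hw
    rcases hqsub Bq hBq hw with ⟨hw0, hw1, hw2⟩ | ⟨hw0, hw1, hw2⟩
    · -- w in middle row
      have hfw : f w = w.2 := by simp [hfdef, hw0]
      refine ⟨hw0, ?_, ?_⟩
      · rcases Nat.lt_trichotomy y.2 w.2 with h | h | h
        · exact h
        · exfalso
          have hwy : w = y := Prod.ext (by rw [hw0, hy1]) h.symm
          obtain ⟨U, _, hU⟩ := hqpart y (Or.inl ⟨hy1, hyb⟩)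
          exact hBqD ((hU Bq ⟨hBq, hwy ▸ hw⟩).trans (hU D ⟨hD, hy⟩).symm)
        · exfalso
          apply hncq
          refine ⟨Bq, hBq, D, hD, hBqD, w, hw, y, hy, ((1 : ℕ), x), hxBq, z, hz,
            ?_, ?_, ?_⟩
          · rw [hfw, hfy]; omega
          · rw [hfy, hfx]; omega
          · rw [hfx, hfz]; omega
      · rcases Nat.lt_trichotomy w.2 z.2 with h | h | h
        · exact h
        · exfalso
          have hwz : w = z := Prod.ext (by rw [hw0, hz1]) h
          obtain ⟨U, _, hU⟩ := hqpart z (Or.inl ⟨hz1, hzb⟩)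
          exact hBqD ((hU Bq ⟨hBq, hwz ▸ hw⟩).trans (hU D ⟨hD, hz⟩).symm)
        · exfalso
          apply hncq
          refine ⟨D, hD, Bq, hBq, hBqD.symm, y, hy, ((1 : ℕ), x), hxBq, z, hz, w, hw,
            ?_, ?_, ?_⟩
          · rw [hfy, hfx]; omega
          · rw [hfx, hfz]; omega
          · rw [hfz, hfw]; omega
    · -- w in bottom row : crossing y, (1,x), z, w
      exfalso
      apply hncq
      have hfw : f w = l + (m + 1 - w.2) := by
        have hne : w.1 ≠ 1 := by omega
        simp [hfdef, hne]
      refine ⟨D, hD, Bq, hBq, hBqD.symm, y, hy, ((1 : ℕ), x), hxBq, z, hz, w, hw,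
        ?_, ?_, ?_⟩
      · rw [hfy, hfx]; omega
      · rw [hfx, hfz]; omega
      · rw [hfz, hfw]; omega
  exact ⟨fun w hw => (key w hw).1, D, hD, hDC, y, hy, z, hz, hy1, hz1,
    fun w hw => (key w hw).2⟩


/-- If `E` is an entrance of a non-trivial `(p,q)`-connected component `C` (a gap
between consecutive middle points of `C` all of whose points lie in some block not
nested in `C`), then for every `x ∈ E` exactly one of the blocks of `p` resp. `q`
through `x` is not nested in `C`, and the other one is nested in `C`. -/
theorem stmt11 (k l m : ℕ) (p q : Set (Set (ℕ × ℕ)))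
    (hpsub : ∀ B ∈ p, B ⊆ {x : ℕ × ℕ |
      (x.1 = 0 ∧ 1 ≤ x.2 ∧ x.2 ≤ k) ∨ (x.1 = 1 ∧ 1 ≤ x.2 ∧ x.2 ≤ l)})
    (hqsub : ∀ B ∈ q, B ⊆ {x : ℕ × ℕ |
      (x.1 = 1 ∧ 1 ≤ x.2 ∧ x.2 ≤ l) ∨ (x.1 = 2 ∧ 1 ≤ x.2 ∧ x.2 ≤ m)})
    (hppart : ∀ x : ℕ × ℕ,
      ((x.1 = 0 ∧ 1 ≤ x.2 ∧ x.2 ≤ k) ∨ (x.1 = 1 ∧ 1 ≤ x.2 ∧ x.2 ≤ l)) →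
        ∃! B, B ∈ p ∧ x ∈ B)
    (hqpart : ∀ x : ℕ × ℕ,
      ((x.1 = 1 ∧ 1 ≤ x.2 ∧ x.2 ≤ l) ∨ (x.1 = 2 ∧ 1 ≤ x.2 ∧ x.2 ≤ m)) →
        ∃! B, B ∈ q ∧ x ∈ B)
    (hncp : Noncross p fun w => if w.1 = 0 then w.2 else k + (l + 1 - w.2))
    (hncq : Noncross q fun w => if w.1 = 1 then w.2 else l + (m + 1 - w.2))
    (C : Set (ℕ × ℕ)) (a : ℕ × ℕ) (hCa : C = {b | ChainRel p q a b})
    (hmid : ∃ x ∈ C, x.1 = 1)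
    (c1 c2 : ℕ × ℕ) (hc1 : c1 ∈ C) (hc2 : c2 ∈ C)
    (hc1m : c1.1 = 1) (hc2m : c2.1 = 1) (hlt : c1.2 < c2.2)
    (hconsec : ∀ x : ℕ, c1.2 < x → x < c2.2 → ((1 : ℕ), x) ∉ C)
    (hentr : ∀ x : ℕ, c1.2 < x → x < c2.2 →
      ∃ B, ((B ∈ p ∧ ¬ NestedIn p C B) ∨ (B ∈ q ∧ ¬ NestedIn q C B)) ∧ ((1 : ℕ), x) ∈ B) :
    ∀ x : ℕ, c1.2 < x → x < c2.2 →
      ∀ Bp ∈ p, ((1 : ℕ), x) ∈ Bp → ∀ Bq ∈ q, ((1 : ℕ), x) ∈ Bq →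
        (NestedIn p C Bp ∧ ¬ NestedIn q C Bq) ∨
          (¬ NestedIn p C Bp ∧ NestedIn q C Bq) := by
  intro x hx1 hx2 Bp hBp hxBp Bq hBq hxBq
  have hxC : ((1 : ℕ), x) ∉ C := hconsec x hx1 hx2
  -- bounds on x from the block Bp
  have hxb : 1 ≤ x ∧ x ≤ l := by
    rcases hpsub Bp hBp hxBp with ⟨h0, h⟩ | ⟨_, h⟩
    · simp at h0
    · exact h
  -- closure of the component under blocks
  have hsub : ∀ B ∈ p ∪ q, ∀ u ∈ B, u ∈ C → ∀ v ∈ B, v ∈ C := by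
    intro B hB u hu huC v hv
    rw [hCa] at huC ⊢
    exact chain_snoc huC hB hu hv
  -- there is a straddling block of the component
  have hstr : ∃ D yy zz, D ∈ p ∪ q ∧ (D ∩ C).Nonempty ∧ yy ∈ D ∧ zz ∈ D ∧
      yy.1 = 1 ∧ zz.1 = 1 ∧ yy.2 < x ∧ x < zz.2 := by
    by_contra hH
    push_neg at hH
    -- every block of C has all its middle legs on one side of x
    have oneside : ∀ B, B ∈ p ∪ q → (B ∩ C).Nonempty →
        ∀ w ∈ B, w.1 = 1 → w.2 < x → ∀ v ∈ B, v.1 = 1 → v.2 < x := by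
      intro B hB hBC w hw hw1 hwx v hv hv1
      rcases Nat.lt_trichotomy v.2 x with h | h | h
      · exact h
      · exfalso
        obtain ⟨u, huB, huC⟩ := hBC
        have hvC : v ∈ C := hsub B hB u huB huC v hv
        have hveq : v = ((1 : ℕ), x) := Prod.ext hv1 h
        exact hxC (hveq ▸ hvC)
      · exact absurd h (by have := hH B w v hB hBC hw hv hw1 hv1 hwx; omega)
    -- transitive-closure path from c1 to c2
    have hc1' : ChainRel p q a c1 := by rw [hCa] at hc1; exact hc1
    have hc2' : ChainRel p q a c2 := by rw [hCa] at hc2; exact hc2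
    have hsymmR : ∀ u v : ℕ × ℕ,
        Relation.TransGen (fun u v => ∃ B, B ∈ p ∪ q ∧ u ∈ B ∧ v ∈ B) u v →
        Relation.TransGen (fun u v => ∃ B, B ∈ p ∪ q ∧ u ∈ B ∧ v ∈ B) v u := by
      intro u v h
      induction h with
      | single h1 => exact Relation.TransGen.single ⟨h1.choose, h1.choose_spec.1,
          h1.choose_spec.2.2, h1.choose_spec.2.1⟩
      | tail _ h2 ih => exact (Relation.TransGen.single
          ⟨h2.choose, h2.choose_spec.1, h2.choose_spec.2.2, h2.choose_spec.2.1⟩).trans ih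
    have htg : Relation.TransGen (fun u v => ∃ B, B ∈ p ∪ q ∧ u ∈ B ∧ v ∈ B) c1 c2 :=
      (hsymmR a c1 (chain_transGen hc1')).trans (chain_transGen hc2')
    -- invariant along the path: all blocks through visited points stay left of x
    have inv : ∀ v, Relation.ReflTransGen
        (fun u v => ∃ B, B ∈ p ∪ q ∧ u ∈ B ∧ v ∈ B) c1 v →
        v ∈ C ∧ ∀ B ∈ p ∪ q, v ∈ B → ∀ yy ∈ B, yy.1 = 1 → yy.2 < x := by
      intro v hv
      induction hv with
      | refl =>
        exact ⟨hc1, fun B hB hc1B yy hyy hyy1 =>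
          oneside B hB ⟨c1, hc1B, hc1⟩ c1 hc1B hc1m hx1 yy hyy hyy1⟩
      | @tail b c _ hstep ih =>
        obtain ⟨B, hB, hbB, hcB⟩ := hstep
        have hcC := hsub B hB b hbB ih.1 c hcB
        refine ⟨hcC, ?_⟩
        intro B' hB' hcB' yy hyy hyy1
        by_cases hcm : c.1 = 1
        · have hcx := ih.2 B hB hbB c hcB hcm
          exact oneside B' hB' ⟨c, hcB', hcC⟩ c hcB' hcm hcx yy hyy hyy1
        ·
          have hBB' : B' = B := by
            rcases hB with hB1 | hB1 <;> rcases hB' with hB2 | hB2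
            · rcases hpsub B hB1 hcB with hv | hv
              · obtain ⟨U, _, hU⟩ := hppart _ (Or.inl hv)
                exact (hU B' ⟨hB2, hcB'⟩).trans (hU B ⟨hB1, hcB⟩).symm
              · exact absurd hv.1 hcm
            · exfalso
              rcases hpsub B hB1 hcB with hv | hv
              · rcases hqsub B' hB2 hcB' with hv' | hv' <;> omega
              · exact hcm hv.1
            · exfalso
              rcases hqsub B hB1 hcB with hv | hv
              · exact hcm hv.1
              · rcases hpsub B' hB2 hcB' with hv' | hv' <;> omega
            · rcases hqsub B hB1 hcB with hv | hv
              · exact absurd hv.1 hcm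
              · obtain ⟨U, _, hU⟩ := hqpart _ (Or.inr hv)
                exact (hU B' ⟨hB2, hcB'⟩).trans (hU B ⟨hB1, hcB⟩).symm
          exact ih.2 B hB hbB yy (hBB' ▸ hyy) hyy1
    obtain ⟨hc2C, hI⟩ := inv c2 htg.to_reflTransGen
    obtain ⟨n, Bs, h1, _, hb, _⟩ := hc2'
    have := hI (Bs (Fin.last n)) (h1 _) hb c2 hb hc2m
    omega
  obtain ⟨D, yy, zz, hDpq, hDC, hyD, hzD, hyy1, hzz1, hyx, hxz⟩ := hstr
  have hndD : ((1 : ℕ), x) ∉ D := by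
    intro hmem
    obtain ⟨u, huD, huC⟩ := hDC
    exact hxC (hsub D hDpq u huD huC _ hmem)
  have hone : NestedIn p C Bp ∨ NestedIn q C Bq := by
    rcases hDpq with hDp | hDq
    · exact Or.inl (nested_of_straddle_p k l p hpsub hppart hncp C x D hDp hDC
        yy zz hyD hzD hyy1 hzz1 hyx hxz Bp hBp hxBp hndD)
    · exact Or.inr (nested_of_straddle_q l m q hqsub hqpart hncq C x D hDq hDC
        yy zz hyD hzD hyy1 hzz1 hyx hxz Bq hBq hxBq hndD)
  obtain ⟨B', hB'c, hxB'⟩ := hentr x hx1 hx2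
  have hnb : ¬ NestedIn p C Bp ∨ ¬ NestedIn q C Bq := by
    rcases hB'c with ⟨hB'p, hnn⟩ | ⟨hB'q, hnn⟩
    · left
      obtain ⟨U, _, hU⟩ := hppart ((1 : ℕ), x) (Or.inr ⟨rfl, hxb⟩)
      rwa [(hU B' ⟨hB'p, hxB'⟩).trans (hU Bp ⟨hBp, hxBp⟩).symm] at hnn
    · right
      obtain ⟨U, _, hU⟩ := hqpart ((1 : ℕ), x) (Or.inl ⟨rfl, hxb⟩)
      rwa [(hU B' ⟨hB'q, hxB'⟩).trans (hU Bq ⟨hBq, hxBq⟩).symm] at hnn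
  tauto


end Stmt11
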